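/- In the model of Algorithm 3, the invariant holds for all reachable states: every synced write whose vid is ≥ the exp_vid of the last persisted WRITEBACK record has its WRITE record present in the NVM log suffix that recovery replays, and the disk page contains the effects of all synced writes with vid < that exp_vid; consequently recovery after any crash produces a page agreeing with every synced write not overwritten by a later synced write. -/
import Mathlib


/- Byte-granularity model: a page is a function from offsets to bytes; a
   record is a partial overwrite (off, len, data) within the page. -/

/-- A page of `n` bytes. -/
abbrev Page (n : ℕ) := Fin n → UInt8

/-- A partial-write record: bytes `[off, off+len)` get `data 0, …, data (len-1)`. -/
structure Rec (n : ℕ) where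
  off  : ℕ
  len  : ℕ
  data : ℕ → UInt8
  wf   : off + len ≤ n

/-- `r` covers offset `i`. -/
def covers {n : ℕ} (r : Rec n) (i : Fin n) : Prop :=
  r.off ≤ i.val ∧ i.val < r.off + r.len

/-- Apply one partial-write record to a page. -/
def applyRec {n : ℕ} (r : Rec n) (p : Page n) : Page n := fun i =>
  if r.off ≤ i.val ∧ i.val < r.off + r.len then r.data (i.val - r.off) else p i

/-- Apply a list of records in order (sequential overwrite application). -/
def applyRecs {n : ℕ} (rs : List (Rec n)) (p : Page n) : Page n :=
  rs.foldl (fun p r => applyRec r p) p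

/-- NVM log entries with version ids: WRITE(vid, record) or
    WRITEBACK(vid, exp_vid). -/
inductive Entry (n : ℕ)
  | write (vid : ℕ) (r : Rec n)
  | wbMark (vid : ℕ) (expVid : ℕ)

/-- State of the Algorithm 3 model: cache page, disk page, NVM log, the
    auto-increment version counter `page_ver_id`, and the volatile prepared
    write-back record (its exp_vid), if a write-back is in flight. -/
structure St (n : ℕ) where
  cache : Page n
  disk  : Page n
  log   : List (Entry n)
  verId : ℕ
  prep  : Option ℕ

/-- Events: sync_write; wb^s (start of write-back, records exp_vid into the
    volatile prep_rec); wb^r (the real, nondeterministically-timed disk write: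
    disk := current cache); wb^e (end of write-back: the prepared WRITEBACK
    record is persisted to the NVM log with vid := page_ver_id). -/
inductive Ev (n : ℕ)
  | syncWrite (r : Rec n)
  | wbS
  | wbR
  | wbE

def step {n : ℕ} (s : St n) : Ev n → St n
  | .syncWrite r =>
      { s with cache := applyRec r s.cache,
               log := s.log ++ [.write s.verId r],
               verId := s.verId + 1 }
  | .wbS => { s with prep := some s.verId }
  | .wbR => { s with disk := s.cache }
  | .wbE =>
      match s.prep with
      | some e => { s with log := s.log ++ [.wbMark s.verId e],
                           verId := s.verId + 1, prep := none }
      | none => s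

def run {n : ℕ} (s : St n) (tr : List (Ev n)) : St n := tr.foldl step s

/-- Algorithm 3 recovery scan: walk the log backwards (argument is the
    reversed log), collecting WRITE records while `exp ≤ vid`; a WRITEBACK
    record updates `exp` to its exp_vid.  Result is in forward replay order. -/
def collectRev {n : ℕ} : ℕ → List (Entry n) → List (Rec n)
  | _, [] => []
  | exp, .write v r :: rest => if exp ≤ v then collectRev exp rest ++ [r] else []
  | exp, .wbMark v e :: rest => if exp ≤ v then collectRev e rest else []

/-- Algorithm 3 recovery: replay the collected records onto the disk page. -/
def recover {n : ℕ} (s : St n) : Page n :=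
  applyRecs (collectRev 0 s.log.reverse) s.disk

mutual
  /-- Well-formed traces with no write-back in flight: each wb^s is followed
      (in order, possibly interleaved with sync writes) by one wb^r and then
      one wb^e; the trace may end in any phase (a crash may occur anywhere). -/
  inductive WF0 {n : ℕ} : List (Ev n) → Prop
    | nil : WF0 []
    | sw {r : Rec n} {t} : WF0 t → WF0 (.syncWrite r :: t)
    | start {t} : WFa t → WF0 (.wbS :: t)
  /-- After wb^s, before wb^r. -/
  inductive WFa {n : ℕ} : List (Ev n) → Prop
    | nil : WFa []
    | sw {r : Rec n} {t} : WFa t → WFa (.syncWrite r :: t)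
    | real {t} : WFb t → WFa (.wbR :: t)
  /-- After wb^r, before wb^e. -/
  inductive WFb {n : ℕ} : List (Ev n) → Prop
    | nil : WFb []
    | sw {r : Rec n} {t} : WFb t → WFb (.syncWrite r :: t)
    | fin {t} : WF0 t → WFb (.wbE :: t)
end

/-- The exp_vid of the last persisted WRITEBACK record (0 if none). -/
def lastWBExp {n : ℕ} : List (Entry n) → ℕ :=
  List.foldl (fun a e => match e with | .wbMark _ e' => e' | _ => a) 0

namespace Alg3Aux

variable {n : ℕ}

def vidOf : Entry n → ℕ
  | .write v _ => v
  | .wbMark v _ => v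

def writesOfLog : List (Entry n) → List (Rec n) :=
  List.filterMap (fun e => match e with | .write _ r => some r | _ => none)

def twrites : List (Ev n) → List (Rec n) :=
  List.filterMap (fun e => match e with | .syncWrite r => some r | _ => none)

@[simp] lemma writesOfLog_nil : writesOfLog ([] : List (Entry n)) = [] := rfl

@[simp] lemma writesOfLog_append (A B : List (Entry n)) :
    writesOfLog (A ++ B) = writesOfLog A ++ writesOfLog B :=
  List.filterMap_append ..

@[simp] lemma writesOfLog_write (v : ℕ) (r : Rec n) (L : List (Entry n)) :
    writesOfLog (Entry.write v r :: L) = r :: writesOfLog L := rfl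

@[simp] lemma writesOfLog_wb (v e : ℕ) (L : List (Entry n)) :
    writesOfLog (Entry.wbMark v e :: L) = writesOfLog L := rfl

@[simp] lemma applyRecs_nil (p : Page n) : applyRecs [] p = p := rfl

@[simp] lemma applyRecs_cons (r : Rec n) (rs : List (Rec n)) (p : Page n) :
    applyRecs (r :: rs) p = applyRecs rs (applyRec r p) := rfl

lemma applyRecs_append (X Y : List (Rec n)) (p : Page n) :
    applyRecs (X ++ Y) p = applyRecs Y (applyRecs X p) :=
  List.foldl_append ..

@[simp] lemma applyRecs_singleton (r : Rec n) (p : Page n) :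
    applyRecs [r] p = applyRec r p := rfl

lemma applyRec_self {r : Rec n} {i : Fin n} (h : covers r i) (p : Page n) :
    applyRec r p i = r.data (i.val - r.off) := if_pos h

lemma applyRec_not {r : Rec n} {i : Fin n} (h : ¬ covers r i) (p : Page n) :
    applyRec r p i = p i := if_neg h

lemma applyRec_congr {r : Rec n} {p q : Page n} {i : Fin n} (h : p i = q i) :
    applyRec r p i = applyRec r q i := by
  unfold applyRec; split <;> simp [h]

lemma applyRecs_congr {rs : List (Rec n)} {p q : Page n} {i : Fin n} (h : p i = q i) :
    applyRecs rs p i = applyRecs rs q i := by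
  induction rs generalizing p q with
  | nil => exact h
  | cons r rs ih => exact ih (applyRec_congr h)

lemma applyRecs_not_covered {rs : List (Rec n)} {i : Fin n}
    (h : ∀ r ∈ rs, ¬ covers r i) (p : Page n) :
    applyRecs rs p i = p i := by
  induction rs generalizing p with
  | nil => rfl
  | cons r rs ih =>
    rw [applyRecs_cons, ih (fun r' hr' => h r' (by simp [hr'])),
      applyRec_not (h r (by simp))]

lemma applyRecs_last {X Y : List (Rec n)} {r : Rec n} {i : Fin n} (hc : covers r i)
    (hY : ∀ r' ∈ Y, ¬ covers r' i) (p : Page n) :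
    applyRecs (X ++ r :: Y) p i = r.data (i.val - r.off) := by
  rw [applyRecs_append, applyRecs_cons, applyRecs_not_covered hY,
    applyRec_self hc]

lemma collectRev_reverse_nil {L : List (Entry n)} {e : ℕ}
    (h : ∀ x ∈ L, vidOf x < e) : collectRev e L.reverse = [] := by
  cases hL : L.reverse with
  | nil => rfl
  | cons x rest =>
    have hx : x ∈ L := by
      have : x ∈ L.reverse := by rw [hL]; exact List.mem_cons_self ..
      simpa using this
    have hlt := h x hx
    cases x with
    | write v r =>
      have hne : ¬ e ≤ v := Nat.not_le.mpr hlt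
      simp [collectRev, hne]
    | wbMark v e' =>
      have hne : ¬ e ≤ v := Nat.not_le.mpr hlt
      simp [collectRev, hne]

lemma collectRev_snoc_write {L : List (Entry n)} {e v : ℕ} (h : e ≤ v) (r : Rec n) :
    collectRev e (L ++ [Entry.write v r]).reverse
      = collectRev e L.reverse ++ [r] := by
  rw [List.reverse_append]; simp [collectRev, h]

lemma collectRev_snoc_wb {L : List (Entry n)} {e v e' : ℕ} (h : e ≤ v) :
    collectRev e (L ++ [Entry.wbMark v e']).reverse = collectRev e' L.reverse := by
  rw [List.reverse_append]; simp [collectRev, h]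

lemma lastWBExp_snoc_write (L : List (Entry n)) (v : ℕ) (r : Rec n) :
    lastWBExp (L ++ [Entry.write v r]) = lastWBExp L := by
  simp [lastWBExp, List.foldl_append]

lemma lastWBExp_snoc_wb (L : List (Entry n)) (v e : ℕ) :
    lastWBExp (L ++ [Entry.wbMark v e]) = e := by
  simp [lastWBExp, List.foldl_append]

lemma fix_snoc {R : List (Rec n)} {q : Page n} (r : Rec n)
    (hF : ∀ i, applyRecs R q i = q i) :
    ∀ i, applyRecs (R ++ [r]) (applyRec r q) i = applyRec r q i := by
  intro i
  rw [applyRecs_append, applyRecs_singleton]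
  by_cases h : covers r i
  · rw [applyRec_self h, applyRec_self h]
  · rw [applyRec_not h, applyRec_not h,
      applyRecs_congr (applyRec_not h q), hF i]

lemma r_snoc {R : List (Rec n)} {d q : Page n} (r : Rec n)
    (hR : ∀ i, applyRecs R d i = q i) :
    ∀ i, applyRecs (R ++ [r]) d i = applyRec r q i := by
  intro i
  rw [applyRecs_append, applyRecs_singleton]
  exact applyRec_congr (hR i)

/-- If the cache is an applyRecs of the log's writes (base irrelevant), then a
    covered, not-later-overwritten write determines the cache value. -/
lemma cache_val {L : List (Entry n)} {q : Page n} {v : ℕ} {r : Rec n} {i : Fin n}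
    (hP : L.Pairwise (fun a b => vidOf a < vidOf b))
    (hmem : Entry.write v r ∈ L) (hc : covers r i)
    (hno : ∀ v' r', Entry.write v' r' ∈ L → v < v' → ¬ covers r' i) :
    applyRecs (writesOfLog L) q i = r.data (i.val - r.off) := by
  obtain ⟨A, B, rfl⟩ := List.append_of_mem hmem
  have hPB : ∀ b ∈ B, v < vidOf b := by
    have h1 := (List.pairwise_append.mp hP).2.1
    intro b hb
    exact (List.pairwise_cons.mp h1).1 b hb
  rw [writesOfLog_append, writesOfLog_write]
  apply applyRecs_last hc
  intro r' hr'
  obtain ⟨en, hen, hfe⟩ := List.mem_filterMap.mp hr'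
  cases en with
  | write v' r'' =>
    have hr'' : r'' = r' := by simpa using hfe
    subst hr''
    exact hno v' r'' (by simp [hen]) (hPB _ hen)
  | wbMark _ _ => simp at hfe

/-- Common (all-phase) invariant. -/
structure Common (s : St n) : Prop where
  hV : ∀ en ∈ s.log, vidOf en < s.verId
  hL : lastWBExp s.log ≤ s.verId
  hP : s.log.Pairwise (fun a b => vidOf a < vidOf b)
  hC : ∃ q : Page n, s.cache = applyRecs (writesOfLog s.log) q
  hR : ∀ i, applyRecs (collectRev 0 s.log.reverse) s.disk i = s.cache i
  hF : ∀ i, applyRecs (collectRev 0 s.log.reverse) s.cache i = s.cache i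
  hM : ∀ v r, Entry.write v r ∈ s.log → lastWBExp s.log ≤ v →
        r ∈ collectRev 0 s.log.reverse
  hD : ∀ v r, Entry.write v r ∈ s.log → v < lastWBExp s.log →
        ∀ i : Fin n, covers r i →
        (∀ v' r', Entry.write v' r' ∈ s.log → v < v' → ¬ covers r' i) →
        s.disk i = r.data (i.val - r.off)

/-- Extra invariant between wb^s and wb^r (exp_vid `e` prepared). -/
structure ExtA (s : St n) (e : ℕ) : Prop where
  he : e ≤ s.verId
  hFa : ∀ i, applyRecs (collectRev e s.log.reverse) s.cache i = s.cache i
  hMa : ∀ v r, Entry.write v r ∈ s.log → e ≤ v → r ∈ collectRev e s.log.reverse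

/-- Extra invariant between wb^r and wb^e. -/
structure ExtB (s : St n) (e : ℕ) : Prop where
  he : e ≤ s.verId
  hRb : ∀ i, applyRecs (collectRev e s.log.reverse) s.disk i = s.cache i
  hFb : ∀ i, applyRecs (collectRev e s.log.reverse) s.cache i = s.cache i
  hMb : ∀ v r, Entry.write v r ∈ s.log → e ≤ v → r ∈ collectRev e s.log.reverse
  hDb : ∀ v r, Entry.write v r ∈ s.log → v < e →
        ∀ i : Fin n, covers r i →
        (∀ v' r', Entry.write v' r' ∈ s.log → v < v' → ¬ covers r' i) →
        s.disk i = r.data (i.val - r.off)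

def InvA (s : St n) : Prop := Common s ∧ ∃ e, s.prep = some e ∧ ExtA s e
def InvB (s : St n) : Prop := Common s ∧ ∃ e, s.prep = some e ∧ ExtB s e

lemma common_sw (r : Rec n) {s : St n} (h : Common s) :
    Common (step s (.syncWrite r)) := by
  rw [show step s (.syncWrite r) = ⟨applyRec r s.cache, s.disk,
    s.log ++ [Entry.write s.verId r], s.verId + 1, s.prep⟩ from rfl]
  obtain ⟨hV, hL, hP, ⟨q, hC⟩, hR, hF, hM, hD⟩ := h
  have hcr : collectRev 0 (s.log ++ [Entry.write s.verId r]).reverse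
      = collectRev 0 s.log.reverse ++ [r] :=
    collectRev_snoc_write (Nat.zero_le _) r
  refine ⟨?_, ?_, ?_, ?_, ?_, ?_, ?_, ?_⟩
  · intro en hen
    rcases List.mem_append.mp hen with h1 | h1
    · exact Nat.lt_trans (hV en h1) (Nat.lt_succ_self _)
    · simp at h1; subst h1; exact Nat.lt_succ_self _
  · show lastWBExp (s.log ++ [Entry.write s.verId r]) ≤ s.verId + 1
    rw [lastWBExp_snoc_write]; exact Nat.le_succ_of_le hL
  · refine List.pairwise_append.mpr ⟨hP, List.pairwise_singleton .., ?_⟩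
    intro a ha b hb
    simp at hb; subst hb
    exact hV a ha
  · refine ⟨q, ?_⟩
    show applyRec r s.cache = _
    rw [writesOfLog_append, writesOfLog_write, writesOfLog_nil,
      applyRecs_append, applyRecs_singleton, hC]
  · show ∀ i, applyRecs (collectRev 0 (s.log ++ [Entry.write s.verId r]).reverse)
      s.disk i = applyRec r s.cache i
    rw [hcr]; exact r_snoc r hR
  · show ∀ i, applyRecs (collectRev 0 (s.log ++ [Entry.write s.verId r]).reverse)
      (applyRec r s.cache) i = applyRec r s.cache i
    rw [hcr]; exact fix_snoc r hF
  · intro v r' hmem hlast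
    rw [hcr]
    rw [show lastWBExp (s.log ++ [Entry.write s.verId r]) = lastWBExp s.log from
      lastWBExp_snoc_write ..] at hlast
    rcases List.mem_append.mp hmem with h1 | h1
    · exact List.mem_append_left _ (hM v r' h1 hlast)
    · simp at h1; obtain ⟨_, h2⟩ := h1; subst h2; simp
  · intro v r' hmem hlt i hc hno
    rw [show lastWBExp (s.log ++ [Entry.write s.verId r]) = lastWBExp s.log from
      lastWBExp_snoc_write ..] at hlt
    rcases List.mem_append.mp hmem with h1 | h1
    · exact hD v r' h1 hlt i hc
        (fun v' r'' hm' => hno v' r'' (List.mem_append_left _ hm'))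
    · simp at h1; obtain ⟨h2, _⟩ := h1; subst h2
      exact absurd (Nat.lt_of_lt_of_le hlt hL) (Nat.lt_irrefl _)

lemma extA_sw (r : Rec n) {s : St n} {e : ℕ} (h : ExtA s e) :
    ExtA (step s (.syncWrite r)) e := by
  rw [show step s (.syncWrite r) = ⟨applyRec r s.cache, s.disk,
    s.log ++ [Entry.write s.verId r], s.verId + 1, s.prep⟩ from rfl]
  obtain ⟨he, hFa, hMa⟩ := h
  have hcr : collectRev e (s.log ++ [Entry.write s.verId r]).reverse
      = collectRev e s.log.reverse ++ [r] := collectRev_snoc_write he r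
  refine ⟨Nat.le_succ_of_le he, ?_, ?_⟩
  · show ∀ i, applyRecs (collectRev e (s.log ++ [Entry.write s.verId r]).reverse)
      (applyRec r s.cache) i = applyRec r s.cache i
    rw [hcr]; exact fix_snoc r hFa
  · intro v r' hmem hev
    rw [hcr]
    rcases List.mem_append.mp hmem with h1 | h1
    · exact List.mem_append_left _ (hMa v r' h1 hev)
    · simp at h1; obtain ⟨_, h2⟩ := h1; subst h2; simp

lemma extB_sw (r : Rec n) {s : St n} {e : ℕ} (h : ExtB s e) :
    ExtB (step s (.syncWrite r)) e := by
  rw [show step s (.syncWrite r) = ⟨applyRec r s.cache, s.disk,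
    s.log ++ [Entry.write s.verId r], s.verId + 1, s.prep⟩ from rfl]
  obtain ⟨he, hRb, hFb, hMb, hDb⟩ := h
  have hcr : collectRev e (s.log ++ [Entry.write s.verId r]).reverse
      = collectRev e s.log.reverse ++ [r] := collectRev_snoc_write he r
  refine ⟨Nat.le_succ_of_le he, ?_, ?_, ?_, ?_⟩
  · show ∀ i, applyRecs (collectRev e (s.log ++ [Entry.write s.verId r]).reverse)
      s.disk i = applyRec r s.cache i
    rw [hcr]; exact r_snoc r hRb
  · show ∀ i, applyRecs (collectRev e (s.log ++ [Entry.write s.verId r]).reverse)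
      (applyRec r s.cache) i = applyRec r s.cache i
    rw [hcr]; exact fix_snoc r hFb
  · intro v r' hmem hev
    rw [hcr]
    rcases List.mem_append.mp hmem with h1 | h1
    · exact List.mem_append_left _ (hMb v r' h1 hev)
    · simp at h1; obtain ⟨_, h2⟩ := h1; subst h2; simp
  · intro v r' hmem hlt i hc hno
    rcases List.mem_append.mp hmem with h1 | h1
    · exact hDb v r' h1 hlt i hc
        (fun v' r'' hm' => hno v' r'' (List.mem_append_left _ hm'))
    · simp at h1; obtain ⟨h2, _⟩ := h1; subst h2
      exact absurd (Nat.lt_of_lt_of_le hlt he) (Nat.lt_irrefl _)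

lemma invA_sw (r : Rec n) {s : St n} (h : InvA s) : InvA (step s (.syncWrite r)) := by
  obtain ⟨hc, e, hp, hx⟩ := h
  exact ⟨common_sw r hc, e, hp, extA_sw r hx⟩

lemma invB_sw (r : Rec n) {s : St n} (h : InvB s) : InvB (step s (.syncWrite r)) := by
  obtain ⟨hc, e, hp, hx⟩ := h
  exact ⟨common_sw r hc, e, hp, extB_sw r hx⟩

lemma invA_of_wbS {s : St n} (h : Common s) : InvA (step s .wbS) := by
  rw [show step s .wbS = ⟨s.cache, s.disk, s.log, s.verId, some s.verId⟩ from rfl]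
  have hnil : collectRev s.verId s.log.reverse = [] :=
    collectRev_reverse_nil h.hV
  refine ⟨⟨h.hV, h.hL, h.hP, h.hC, h.hR, h.hF, h.hM, h.hD⟩,
    s.verId, rfl, Nat.le_refl _, ?_, ?_⟩
  · intro i; rw [hnil]; rfl
  · intro v r hmem hev
    exact absurd (Nat.lt_of_lt_of_le (h.hV _ hmem) hev) (Nat.lt_irrefl _)

lemma invB_of_wbR {s : St n} (h : InvA s) : InvB (step s .wbR) := by
  rw [show step s .wbR = ⟨s.cache, s.cache, s.log, s.verId, s.prep⟩ from rfl]
  obtain ⟨⟨hV, hL, hP, hC, hR, hF, hM, hD⟩, e, hp, he, hFa, hMa⟩ := h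
  obtain ⟨q, hq⟩ := hC
  have hcache : ∀ v r, Entry.write v r ∈ s.log →
      ∀ i : Fin n, covers r i →
      (∀ v' r', Entry.write v' r' ∈ s.log → v < v' → ¬ covers r' i) →
      s.cache i = r.data (i.val - r.off) := by
    intro v r hmem i hc hno
    rw [hq]; exact cache_val hP hmem hc hno
  refine ⟨⟨hV, hL, hP, ⟨q, hq⟩, hF, hF, hM, ?_⟩, e, hp, he, hFa, hFa, hMa, ?_⟩
  · intro v r hmem _ i hc hno
    exact hcache v r hmem i hc hno
  · intro v r hmem _ i hc hno
    exact hcache v r hmem i hc hno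

lemma common_of_wbE {s : St n} (h : InvB s) : Common (step s .wbE) := by
  obtain ⟨⟨hV, hL, hP, hC, hR, hF, hM, hD⟩, e, hp, he, hRb, hFb, hMb, hDb⟩ := h
  obtain ⟨q, hq⟩ := hC
  have hst : step s .wbE =
      ⟨s.cache, s.disk, s.log ++ [Entry.wbMark s.verId e], s.verId + 1, none⟩ := by
    unfold step
    rw [hp]
  rw [hst]
  have hcr : collectRev 0 (s.log ++ [Entry.wbMark s.verId e]).reverse
      = collectRev e s.log.reverse := collectRev_snoc_wb (Nat.zero_le _)
  refine ⟨?_, ?_, ?_, ?_, ?_, ?_, ?_, ?_⟩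
  · intro en hen
    rcases List.mem_append.mp hen with h1 | h1
    · exact Nat.lt_trans (hV en h1) (Nat.lt_succ_self _)
    · simp at h1; subst h1; exact Nat.lt_succ_self _
  · show lastWBExp (s.log ++ [Entry.wbMark s.verId e]) ≤ s.verId + 1
    rw [lastWBExp_snoc_wb]; exact Nat.le_succ_of_le he
  · refine List.pairwise_append.mpr ⟨hP, List.pairwise_singleton .., ?_⟩
    intro a ha b hb
    simp at hb; subst hb
    exact hV a ha
  · exact ⟨q, by rw [writesOfLog_append, writesOfLog_wb, writesOfLog_nil,
      List.append_nil]; exact hq⟩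
  · intro i; rw [hcr]; exact hRb i
  · intro i; rw [hcr]; exact hFb i
  · intro v r hmem hlast
    rw [hcr]
    rw [show lastWBExp (s.log ++ [Entry.wbMark s.verId e]) = e from
      lastWBExp_snoc_wb ..] at hlast
    rcases List.mem_append.mp hmem with h1 | h1
    · exact hMb v r h1 hlast
    · simp at h1
  · intro v r hmem hlt i hc hno
    rw [show lastWBExp (s.log ++ [Entry.wbMark s.verId e]) = e from
      lastWBExp_snoc_wb ..] at hlt
    rcases List.mem_append.mp hmem with h1 | h1
    · exact hDb v r h1 hlt i hc
        (fun v' r'' hm' => hno v' r'' (List.mem_append_left _ hm'))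
    · simp at h1

mutual
theorem run0 : ∀ (t : List (Ev n)) (s : St n), WF0 t → Common s → Common (run s t)
  | _, _, .nil, h => h
  | _, s, .sw (r := r) (t := t) hwf, h => run0 t _ hwf (common_sw r h)
  | _, s, .start (t := t) hwf, h => runa t _ hwf (invA_of_wbS h)

theorem runa : ∀ (t : List (Ev n)) (s : St n), WFa t → InvA s → Common (run s t)
  | _, _, .nil, h => h.1
  | _, s, .sw (r := r) (t := t) hwf, h => runa t _ hwf (invA_sw r h)
  | _, s, .real (t := t) hwf, h => runb t _ hwf (invB_of_wbR h)

theorem runb : ∀ (t : List (Ev n)) (s : St n), WFb t → InvB s → Common (run s t)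
  | _, _, .nil, h => h.1
  | _, s, .sw (r := r) (t := t) hwf, h => runb t _ hwf (invB_sw r h)
  | _, s, .fin (t := t) hwf, h => run0 t _ hwf (common_of_wbE h)
end

lemma log_writes : ∀ (t : List (Ev n)) (s : St n),
    writesOfLog (run s t).log = writesOfLog s.log ++ twrites t := by
  intro t
  induction t with
  | nil => intro s; simp [run, twrites]
  | cons e t ih =>
    intro s
    have hrun : run s (e :: t) = run (step s e) t := rfl
    rw [hrun, ih]
    cases e with
    | syncWrite r => simp [step, twrites]
    | wbS => simp [step, twrites]
    | wbR => simp [step, twrites]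
    | wbE =>
      cases hp : s.prep with
      | none => simp [step, hp, twrites]
      | some e' => simp [step, hp, twrites]

end Alg3Aux

/-- Invariant of all reachable states of the Algorithm 3
    model (from a consistent initial state, along well-formed traces):
    (1) every synced write whose vid is ≥ the exp_vid of the last persisted
        WRITEBACK has its WRITE record in the NVM log suffix that recovery
        replays;
    (2) the disk page contains the effects of every synced write with vid <
        that exp_vid (at each offset it covers that no later synced write
        overwrites); and consequently
    (3) recovery after any crash produces a page agreeing with every synced
        write not overwritten by a later synced write. -/
theorem algorithm3_invariant (n : ℕ) (p₀ : Page n) (tr : List (Ev n))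
    (hwf : WF0 tr) :
    let init : St n := ⟨p₀, p₀, [], 0, none⟩
    let s := run init tr
    (∀ v r, Entry.write v r ∈ s.log → lastWBExp s.log ≤ v →
      r ∈ collectRev 0 s.log.reverse) ∧
    (∀ v r, Entry.write v r ∈ s.log → v < lastWBExp s.log →
      ∀ i : Fin n, covers r i →
        (∀ v' r', Entry.write v' r' ∈ s.log → v < v' → ¬ covers r' i) →
        s.disk i = r.data (i.val - r.off)) ∧
    (∀ a r b, tr = a ++ Ev.syncWrite r :: b →
      ∀ i : Fin n, covers r i →
        (∀ r', Ev.syncWrite r' ∈ b → ¬ covers r' i) →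
        recover s i = r.data (i.val - r.off)) := by
  intro init s
  open Alg3Aux in
  have hinit : Alg3Aux.Common init := by
    refine ⟨?_, ?_, ?_, ⟨p₀, rfl⟩, ?_, ?_, ?_, ?_⟩ <;> simp [init, lastWBExp, collectRev]
  have hcom : Alg3Aux.Common s := Alg3Aux.run0 tr init hwf hinit
  refine ⟨hcom.hM, hcom.hD, ?_⟩
  intro a r b htr i hc hno
  obtain ⟨q, hq⟩ := hcom.hC
  have hw : Alg3Aux.writesOfLog s.log = Alg3Aux.twrites tr := by
    have := Alg3Aux.log_writes tr init
    simpa [init] using this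
  have htw : Alg3Aux.twrites tr
      = Alg3Aux.twrites a ++ r :: Alg3Aux.twrites b := by
    rw [htr]; simp [Alg3Aux.twrites]
  have hno' : ∀ r' ∈ Alg3Aux.twrites b, ¬ covers r' i := by
    intro r' hr'
    obtain ⟨ev, hev, hfe⟩ := List.mem_filterMap.mp hr'
    cases ev with
    | syncWrite r'' =>
      have : r'' = r' := by simpa using hfe
      subst this
      exact hno r'' hev
    | wbS => simp at hfe
    | wbR => simp at hfe
    | wbE => simp at hfe
  have hrec : recover s i = s.cache i := hcom.hR i
  rw [hrec, hq, hw, htw]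
  exact Alg3Aux.applyRecs_last hc hno' q
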